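/- Let T : 𝓢' → 𝓢' be a continuous linear map and T₀ : 𝓢 → 𝓢 a continuous linear map with j ∘ T₀ = T ∘ j. If (Φ_ε)_{ε∈(0,1]} is a test object for (𝓢',𝓢), then the net (T₀ ∘ Φ_ε − Φ_ε ∘ T)_{ε∈(0,1]} is a 0-test object; if (Φ_ε) is a 0-test object, then (T₀ ∘ Φ_ε − Φ_ε ∘ T) is again a 0-test object. -/

import Mathlib

open MeasureTheory SchwartzMap Filter Topology Bornology Complex

noncomputable section

/-- The Schwartz space `𝓢(ℝⁿ, ℂ)`. -/
abbrev Sch (n : ℕ) := SchwartzMap (EuclideanSpace ℝ (Fin n)) ℂ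

/-- The space `𝓢'` of tempered distributions, i.e. the continuous linear functionals on `𝓢`,
endowed (by Mathlib's default instance) with the strong topology of uniform convergence on
bounded subsets of `𝓢`. -/
abbrev SchDual (n : ℕ) := Sch n →L[ℂ] ℂ

/-- The canonical embedding `j : 𝓢 → 𝓢'`, `j(f)(g) = ∫ f(x) g(x) dx`. -/
def jEmb {n : ℕ} (f : Sch n) : SchDual n := by
  refine SchwartzMap.mkCLMtoNormedSpace (fun g : Sch n => ∫ x, f x * g x) ?_ ?_ ?_
  · intro g h
    have hg : Integrable (fun x => f x * g x) volume :=
      g.integrable.bdd_mul f.continuous.aestronglyMeasurable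
        (Eventually.of_forall fun x => f.norm_le_seminorm ℂ x)
    have hh : Integrable (fun x => f x * h x) volume :=
      h.integrable.bdd_mul f.continuous.aestronglyMeasurable
        (Eventually.of_forall fun x => f.norm_le_seminorm ℂ x)
    simp only [SchwartzMap.add_apply, mul_add]
    exact integral_add hg hh
  · intro a g
    simp only [SchwartzMap.smul_apply, smul_eq_mul, RingHom.id_apply]
    rw [← integral_const_mul]
    congr 1; funext x; ring
  · refine ⟨{(0, 0)}, ∫ x, ‖f x‖, integral_nonneg (fun x => norm_nonneg _), fun g => ?_⟩
    refine (norm_integral_le_integral_norm _).trans ?_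
    have : ∀ x, ‖f x * g x‖ ≤ ‖f x‖ * (SchwartzMap.seminorm ℂ 0 0) g := by
      intro x
      rw [norm_mul]
      exact mul_le_mul_of_nonneg_left (g.norm_le_seminorm ℂ x) (norm_nonneg _)
    refine (integral_mono_of_nonneg (Eventually.of_forall fun x => norm_nonneg _)
      (f.integrable.norm.mul_const _) (Eventually.of_forall this)).trans ?_
    rw [integral_mul_const]
    simp [schwartzSeminormFamily]

/-- The filter describing `ε → 0` with `ε ∈ (0,1]`. -/
def zeroFilter : Filter ℝ := nhdsWithin 0 (Set.Ioc 0 1)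

/-- A *test object* for `(𝓢', 𝓢)`: a net `(Φ_ε)` of continuous linear maps `𝓢' → 𝓢` such that
(ii) `j ∘ Φ_ε → id` in `L_b(𝓢',𝓢')`, (iii) `sup_{f ∈ B} q(Φ_ε (j f) - f) = O(ε^m)` for every
`m ∈ ℕ`, every bounded `B ⊆ 𝓢` and every seminorm `q` of `𝓢`, and (iv) for every bounded
`B' ⊆ 𝓢'` and every seminorm `q` of `𝓢` there is `N` with `sup_{u ∈ B'} q(Φ_ε u) = O(ε^{-N})`.
(The strong topology of `L_b(𝓢',𝓢')`, resp. its seminorms, are spelled out via uniform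
convergence on bounded sets, the seminorms of `𝓢'` being suprema over bounded subsets of `𝓢`.) -/
structure IsTestObject {n : ℕ} (Φ : ℝ → (SchDual n →L[ℂ] Sch n)) : Prop where
  tendsto_id : ∀ B' : Set (SchDual n), IsVonNBounded ℂ B' →
    ∀ B : Set (Sch n), IsVonNBounded ℂ B → ∀ δ > (0:ℝ), ∀ᶠ ε in zeroFilter,
      ∀ u ∈ B', ∀ g ∈ B, ‖jEmb (Φ ε u) g - u g‖ < δ
  negligible_on_Sch : ∀ m : ℕ, ∀ B : Set (Sch n), IsVonNBounded ℂ B → ∀ k l : ℕ,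
    ∃ C : ℝ, ∀ᶠ ε in zeroFilter, ∀ f ∈ B,
      SchwartzMap.seminorm ℂ k l (Φ ε (jEmb f) - f) ≤ C * ε ^ m
  moderate : ∀ B' : Set (SchDual n), IsVonNBounded ℂ B' → ∀ k l : ℕ,
    ∃ N : ℕ, ∃ C : ℝ, ∀ᶠ ε in zeroFilter, ∀ u ∈ B',
      SchwartzMap.seminorm ℂ k l (Φ ε u) ≤ C / ε ^ N

/-- A *0-test object* for `(𝓢', 𝓢)`: as `IsTestObject`, but with `j ∘ Φ_ε → 0` in
`L_b(𝓢',𝓢')` in (ii') and `sup_{f ∈ B} q(Φ_ε (j f)) = O(ε^m)` in (iii'). -/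
structure IsZeroTestObject {n : ℕ} (Φ : ℝ → (SchDual n →L[ℂ] Sch n)) : Prop where
  tendsto_zero : ∀ B' : Set (SchDual n), IsVonNBounded ℂ B' →
    ∀ B : Set (Sch n), IsVonNBounded ℂ B → ∀ δ > (0:ℝ), ∀ᶠ ε in zeroFilter,
      ∀ u ∈ B', ∀ g ∈ B, ‖jEmb (Φ ε u) g‖ < δ
  negligible_on_Sch : ∀ m : ℕ, ∀ B : Set (Sch n), IsVonNBounded ℂ B → ∀ k l : ℕ,
    ∃ C : ℝ, ∀ᶠ ε in zeroFilter, ∀ f ∈ B,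
      SchwartzMap.seminorm ℂ k l (Φ ε (jEmb f)) ≤ C * ε ^ m
  moderate : ∀ B' : Set (SchDual n), IsVonNBounded ℂ B' → ∀ k l : ℕ,
    ∃ N : ℕ, ∃ C : ℝ, ∀ᶠ ε in zeroFilter, ∀ u ∈ B',
      SchwartzMap.seminorm ℂ k l (Φ ε u) ≤ C / ε ^ N


section Helpers

variable {n : ℕ}

lemma integrableMul (f g : Sch n) : Integrable (fun x => f x * g x) volume :=
  g.integrable.bdd_mul f.continuous.aestronglyMeasurable
    (Eventually.of_forall fun x => f.norm_le_seminorm ℂ x)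

lemma jEmb_apply (f g : Sch n) : jEmb f g = ∫ x, f x * g x := rfl

lemma jEmb_sub (f₁ f₂ g : Sch n) : jEmb (f₁ - f₂) g = jEmb f₁ g - jEmb f₂ g := by
  simp only [jEmb_apply, SchwartzMap.sub_apply, sub_mul]
  exact integral_sub (integrableMul f₁ g) (integrableMul f₂ g)

lemma zeroFilter_Ioc : ∀ᶠ ε in zeroFilter, ε ∈ Set.Ioc (0:ℝ) 1 :=
  self_mem_nhdsWithin

lemma T0_bound (T₀ : Sch n →L[ℂ] Sch n) (k l : ℕ) :
    ∃ s : Finset (ℕ × ℕ), ∃ C : ℝ, 0 ≤ C ∧ ∀ h : Sch n,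
      SchwartzMap.seminorm ℂ k l (T₀ h)
        ≤ C * (s.sup (schwartzSeminormFamily ℂ (EuclideanSpace ℝ (Fin n)) ℂ)) h := by
  have hq : WithSeminorms (schwartzSeminormFamily ℂ (EuclideanSpace ℝ (Fin n)) ℂ) :=
    schwartz_withSeminorms ℂ _ ℂ
  set p : Seminorm ℂ (Sch n) := (SchwartzMap.seminorm ℂ k l).comp T₀.toLinearMap with hp
  have hpc : Continuous p := by
    have h1 : Continuous (schwartzSeminormFamily ℂ (EuclideanSpace ℝ (Fin n)) ℂ (k, l)) :=
      hq.continuous_seminorm (k, l)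
    exact h1.comp T₀.continuous
  obtain ⟨s, C, hC0, hle⟩ := Seminorm.bound_of_continuous hq p hpc
  refine ⟨s, C, C.coe_nonneg, fun h => ?_⟩
  have := hle h
  simpa [hp, Seminorm.comp_apply, Seminorm.smul_apply, NNReal.smul_def] using this

/-- A continuous `T : 𝓢' → 𝓢'` maps nets that go to zero uniformly on bounded
sets (uniformly over `u ∈ B'`) to nets with the same property. -/
lemma T_small (T : SchDual n →L[ℂ] SchDual n) (B' : Set (SchDual n))
    (v : ℝ → SchDual n → SchDual n)
    (hv : ∀ B : Set (Sch n), IsVonNBounded ℂ B → ∀ δ > (0:ℝ),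
      ∀ᶠ ε in zeroFilter, ∀ u ∈ B', ∀ g ∈ B, ‖v ε u g‖ < δ)
    (B : Set (Sch n)) (hB : IsVonNBounded ℂ B) (δ : ℝ) (hδ : 0 < δ) :
    ∀ᶠ ε in zeroFilter, ∀ u ∈ B', ∀ g ∈ B, ‖T (v ε u) g‖ < δ := by
  have hW : {w : SchDual n | ∀ g ∈ B, ‖w g‖ < δ} ∈ (𝓝 (0 : SchDual n)) := by
    refine ContinuousLinearMap.hasBasis_nhds_zero.mem_iff.mpr
      ⟨(B, Metric.ball (0:ℂ) δ), ⟨hB, Metric.ball_mem_nhds _ hδ⟩, fun w hw g hg => ?_⟩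
    simpa [mem_ball_zero_iff] using hw g hg
  have hpre : T ⁻¹' {w : SchDual n | ∀ g ∈ B, ‖w g‖ < δ} ∈ (𝓝 (0 : SchDual n)) := by
    refine T.continuous.continuousAt.preimage_mem_nhds ?_
    rwa [map_zero]
  rcases ContinuousLinearMap.hasBasis_nhds_zero.mem_iff.mp hpre with ⟨⟨S, V⟩, ⟨hS, hV⟩, hsub⟩
  rcases Metric.mem_nhds_iff.mp hV with ⟨δ', hδ', hball⟩
  filter_upwards [hv S hS δ' hδ'] with ε hε u hu g hg
  have hmem : v ε u ∈ T ⁻¹' {w : SchDual n | ∀ g ∈ B, ‖w g‖ < δ} := by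
    refine hsub fun x hx => hball ?_
    simpa [mem_ball_zero_iff] using hε u hu x hx
  exact hmem g hg

lemma sup_negligible (s : Finset (ℕ × ℕ)) (B : Set (Sch n)) (m : ℕ)
    (w : ℝ → Sch n → Sch n)
    (h : ∀ k l : ℕ, ∃ C : ℝ, ∀ᶠ ε in zeroFilter, ∀ f ∈ B,
      SchwartzMap.seminorm ℂ k l (w ε f) ≤ C * ε ^ m) :
    ∃ C : ℝ, 0 ≤ C ∧ ∀ᶠ ε in zeroFilter, ∀ f ∈ B,
      (s.sup (schwartzSeminormFamily ℂ (EuclideanSpace ℝ (Fin n)) ℂ)) (w ε f)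
        ≤ C * ε ^ m := by
  choose C hC using fun i : ℕ × ℕ => h i.1 i.2
  refine ⟨∑ i ∈ s, max (C i) 0, Finset.sum_nonneg fun i _ => le_max_right _ _, ?_⟩
  have hev : ∀ᶠ ε in zeroFilter, ∀ i ∈ s, ∀ f ∈ B,
      SchwartzMap.seminorm ℂ i.1 i.2 (w ε f) ≤ C i * ε ^ m :=
    (eventually_all_finset s).mpr fun i _ => hC i
  filter_upwards [hev, zeroFilter_Ioc] with ε hε hε1 f hf
  have hεm : 0 < ε ^ m := pow_pos hε1.1 m
  have hsum : 0 ≤ ∑ i ∈ s, max (C i) 0 := Finset.sum_nonneg fun i _ => le_max_right _ _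
  refine Seminorm.finset_sup_apply_le (by positivity) fun i hi => ?_
  calc schwartzSeminormFamily ℂ (EuclideanSpace ℝ (Fin n)) ℂ i (w ε f)
      ≤ C i * ε ^ m := hε i hi f hf
    _ ≤ (∑ j ∈ s, max (C j) 0) * ε ^ m := by
        refine mul_le_mul_of_nonneg_right ?_ hεm.le
        exact (le_max_left _ _).trans
          (Finset.single_le_sum (fun j _ => le_max_right (C j) 0) hi)

lemma sup_moderate (s : Finset (ℕ × ℕ)) (B' : Set (SchDual n))
    (w : ℝ → SchDual n → Sch n)
    (h : ∀ k l : ℕ, ∃ N : ℕ, ∃ C : ℝ, ∀ᶠ ε in zeroFilter, ∀ u ∈ B',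
      SchwartzMap.seminorm ℂ k l (w ε u) ≤ C / ε ^ N) :
    ∃ N : ℕ, ∃ C : ℝ, 0 ≤ C ∧ ∀ᶠ ε in zeroFilter, ∀ u ∈ B',
      (s.sup (schwartzSeminormFamily ℂ (EuclideanSpace ℝ (Fin n)) ℂ)) (w ε u)
        ≤ C / ε ^ N := by
  choose N C hC using fun i : ℕ × ℕ => h i.1 i.2
  refine ⟨s.sup N, ∑ i ∈ s, max (C i) 0,
    Finset.sum_nonneg fun i _ => le_max_right _ _, ?_⟩
  have hev : ∀ᶠ ε in zeroFilter, ∀ i ∈ s, ∀ u ∈ B',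
      SchwartzMap.seminorm ℂ i.1 i.2 (w ε u) ≤ C i / ε ^ (N i) :=
    (eventually_all_finset s).mpr fun i _ => hC i
  filter_upwards [hev, zeroFilter_Ioc] with ε hε hε1 u hu
  have h0 : (0:ℝ) < ε := hε1.1
  have hsum : 0 ≤ ∑ i ∈ s, max (C i) 0 := Finset.sum_nonneg fun i _ => le_max_right _ _
  have hden : 0 < ε ^ (s.sup N) := pow_pos h0 _
  refine Seminorm.finset_sup_apply_le (by positivity) fun i hi => ?_
  have hpow : ε ^ (s.sup N) ≤ ε ^ (N i) :=
    pow_le_pow_of_le_one h0.le hε1.2 (Finset.le_sup hi)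
  calc schwartzSeminormFamily ℂ (EuclideanSpace ℝ (Fin n)) ℂ i (w ε u)
      ≤ C i / ε ^ (N i) := hε i hi u hu
    _ ≤ (∑ j ∈ s, max (C j) 0) / ε ^ (s.sup N) := by
        refine div_le_div₀ hsum ?_ hden hpow
        exact (le_max_left _ _).trans
          (Finset.single_le_sum (fun j _ => le_max_right (C j) 0) hi)

/-- The `moderate` property of the commutator, common to both cases. -/
lemma commutator_moderate (T : SchDual n →L[ℂ] SchDual n) (T₀ : Sch n →L[ℂ] Sch n)
    (Φ : ℝ → (SchDual n →L[ℂ] Sch n))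
    (hmod : ∀ B' : Set (SchDual n), IsVonNBounded ℂ B' → ∀ k l : ℕ,
      ∃ N : ℕ, ∃ C : ℝ, ∀ᶠ ε in zeroFilter, ∀ u ∈ B',
        SchwartzMap.seminorm ℂ k l (Φ ε u) ≤ C / ε ^ N) :
    ∀ B' : Set (SchDual n), IsVonNBounded ℂ B' → ∀ k l : ℕ,
      ∃ N : ℕ, ∃ C : ℝ, ∀ᶠ ε in zeroFilter, ∀ u ∈ B',
        SchwartzMap.seminorm ℂ k l ((T₀.comp (Φ ε) - (Φ ε).comp T) u) ≤ C / ε ^ N := by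
  intro B' hB' k l
  obtain ⟨s, C₀, hC₀, hT₀⟩ := T0_bound T₀ k l
  obtain ⟨N₁, C₁, hC₁, h₁⟩ := sup_moderate s B' (fun ε u => Φ ε u)
    (fun k' l' => hmod B' hB' k' l')
  obtain ⟨N₂, C₂, h₂⟩ := hmod (T '' B') (hB'.image T) k l
  refine ⟨max N₁ N₂, C₀ * C₁ + max C₂ 0, ?_⟩
  filter_upwards [h₁, h₂, zeroFilter_Ioc] with ε hε₁ hε₂ hε1 u hu
  have h0 : (0:ℝ) < ε := hε1.1
  have hden : 0 < ε ^ (max N₁ N₂) := pow_pos h0 _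
  have key : SchwartzMap.seminorm ℂ k l ((T₀.comp (Φ ε) - (Φ ε).comp T) u)
      ≤ SchwartzMap.seminorm ℂ k l (T₀ (Φ ε u))
        + SchwartzMap.seminorm ℂ k l (Φ ε (T u)) := by
    simpa [ContinuousLinearMap.sub_apply, ContinuousLinearMap.comp_apply]
      using map_sub_le_add (SchwartzMap.seminorm ℂ k l) (T₀ (Φ ε u)) (Φ ε (T u))
  have b1 : SchwartzMap.seminorm ℂ k l (T₀ (Φ ε u)) ≤ C₀ * C₁ / ε ^ (max N₁ N₂) := by
    refine (hT₀ (Φ ε u)).trans ?_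
    have := hε₁ u hu
    calc C₀ * (s.sup (schwartzSeminormFamily ℂ (EuclideanSpace ℝ (Fin n)) ℂ)) (Φ ε u)
        ≤ C₀ * (C₁ / ε ^ N₁) := mul_le_mul_of_nonneg_left this hC₀
      _ ≤ C₀ * C₁ / ε ^ (max N₁ N₂) := by
          rw [mul_div_assoc]
          refine mul_le_mul_of_nonneg_left ?_ hC₀
          exact div_le_div₀ hC₁ le_rfl hden
            (pow_le_pow_of_le_one h0.le hε1.2 (le_max_left _ _))
  have b2 : SchwartzMap.seminorm ℂ k l (Φ ε (T u)) ≤ max C₂ 0 / ε ^ (max N₁ N₂) := by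
    refine (hε₂ (T u) (Set.mem_image_of_mem T hu)).trans ?_
    exact div_le_div₀ (le_max_right _ _) (le_max_left _ _) hden
      (pow_le_pow_of_le_one h0.le hε1.2 (le_max_right _ _))
  calc SchwartzMap.seminorm ℂ k l ((T₀.comp (Φ ε) - (Φ ε).comp T) u)
      ≤ C₀ * C₁ / ε ^ (max N₁ N₂) + max C₂ 0 / ε ^ (max N₁ N₂) :=
        key.trans (add_le_add b1 b2)
    _ = (C₀ * C₁ + max C₂ 0) / ε ^ (max N₁ N₂) := (add_div _ _ _).symm

end Helpers

set_option maxHeartbeats 1600000 in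
/-- Let `T : 𝓢' → 𝓢'` and `T₀ : 𝓢 → 𝓢` be continuous linear maps with `j ∘ T₀ = T ∘ j`.
If `(Φ_ε)` is a test object for `(𝓢',𝓢)` then `(T₀ ∘ Φ_ε − Φ_ε ∘ T)` is a 0-test object;
if `(Φ_ε)` is a 0-test object then `(T₀ ∘ Φ_ε − Φ_ε ∘ T)` is again a 0-test object. -/
theorem commutator_with_test_object (n : ℕ) (hn : 0 < n)
    (T : SchDual n →L[ℂ] SchDual n) (T₀ : Sch n →L[ℂ] Sch n)
    (hcomm : ∀ f : Sch n, jEmb (T₀ f) = T (jEmb f)) :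
    (∀ Φ : ℝ → (SchDual n →L[ℂ] Sch n), IsTestObject Φ →
      IsZeroTestObject (fun ε => T₀.comp (Φ ε) - (Φ ε).comp T)) ∧
    (∀ Φ : ℝ → (SchDual n →L[ℂ] Sch n), IsZeroTestObject Φ →
      IsZeroTestObject (fun ε => T₀.comp (Φ ε) - (Φ ε).comp T)) := by
  constructor
  · intro Φ hΦ
    refine ⟨?_, ?_, commutator_moderate T T₀ Φ hΦ.moderate⟩
    · -- tendsto_zero
      intro B' hB' B hB δ hδ
      have hv : ∀ B₂ : Set (Sch n), IsVonNBounded ℂ B₂ → ∀ δ' > (0:ℝ),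
          ∀ᶠ ε in zeroFilter, ∀ u ∈ B', ∀ g ∈ B₂,
            ‖(jEmb (Φ ε u) - u) g‖ < δ' := by
        intro B₂ hB₂ δ' hδ'
        filter_upwards [hΦ.tendsto_id B' hB' B₂ hB₂ δ' hδ'] with ε hε u hu g hg
        simpa [ContinuousLinearMap.sub_apply] using hε u hu g hg
      have h₁ := T_small T B' (fun ε u => jEmb (Φ ε u) - u) hv B hB (δ/2) (half_pos hδ)
      have h₂ := hΦ.tendsto_id (T '' B') (hB'.image T) B hB (δ/2) (half_pos hδ)
      filter_upwards [h₁, h₂] with ε hε₁ hε₂ u hu g hg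
      have e1 : jEmb ((T₀.comp (Φ ε) - (Φ ε).comp T) u) g
          = T (jEmb (Φ ε u) - u) g - (jEmb (Φ ε (T u)) g - T u g) := by
        have : (T₀.comp (Φ ε) - (Φ ε).comp T) u = T₀ (Φ ε u) - Φ ε (T u) := by
          simp [ContinuousLinearMap.sub_apply, ContinuousLinearMap.comp_apply]
        rw [this, jEmb_sub, hcomm (Φ ε u), map_sub]
        simp only [ContinuousLinearMap.sub_apply]
        ring
      rw [e1]
      calc ‖T (jEmb (Φ ε u) - u) g - (jEmb (Φ ε (T u)) g - T u g)‖
          ≤ ‖T (jEmb (Φ ε u) - u) g‖ + ‖jEmb (Φ ε (T u)) g - T u g‖ := norm_sub_le _ _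
        _ < δ/2 + δ/2 :=
            add_lt_add (hε₁ u hu g hg) (hε₂ (T u) (Set.mem_image_of_mem T hu) g hg)
        _ = δ := add_halves δ
    · -- negligible_on_Sch
      intro m B hB k l
      obtain ⟨s, C₀, hC₀, hT₀⟩ := T0_bound T₀ k l
      obtain ⟨C₁, hC₁, h₁⟩ := sup_negligible s B m (fun ε f => Φ ε (jEmb f) - f)
        (fun k' l' => hΦ.negligible_on_Sch m B hB k' l')
      obtain ⟨C₂, h₂⟩ := hΦ.negligible_on_Sch m (T₀ '' B) (hB.image T₀) k l
      refine ⟨C₀ * C₁ + max C₂ 0, ?_⟩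
      filter_upwards [h₁, h₂, zeroFilter_Ioc] with ε hε₁ hε₂ hε1 f hf
      have hεm : 0 < ε ^ m := pow_pos hε1.1 m
      have e1 : (T₀.comp (Φ ε) - (Φ ε).comp T) (jEmb f)
          = T₀ (Φ ε (jEmb f) - f) - (Φ ε (jEmb (T₀ f)) - T₀ f) := by
        have hc : T (jEmb f) = jEmb (T₀ f) := (hcomm f).symm
        simp only [ContinuousLinearMap.sub_apply, ContinuousLinearMap.comp_apply,
          map_sub, hc]
        abel
      rw [e1]
      have key : SchwartzMap.seminorm ℂ k l
            (T₀ (Φ ε (jEmb f) - f) - (Φ ε (jEmb (T₀ f)) - T₀ f))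
          ≤ SchwartzMap.seminorm ℂ k l (T₀ (Φ ε (jEmb f) - f))
            + SchwartzMap.seminorm ℂ k l (Φ ε (jEmb (T₀ f)) - T₀ f) :=
        map_sub_le_add _ _ _
      have b1 : SchwartzMap.seminorm ℂ k l (T₀ (Φ ε (jEmb f) - f)) ≤ C₀ * C₁ * ε ^ m := by
        refine (hT₀ _).trans ?_
        rw [mul_assoc]
        exact mul_le_mul_of_nonneg_left (hε₁ f hf) hC₀
      have b2 : SchwartzMap.seminorm ℂ k l (Φ ε (jEmb (T₀ f)) - T₀ f)
          ≤ max C₂ 0 * ε ^ m := by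
        refine (hε₂ (T₀ f) (Set.mem_image_of_mem T₀ hf)).trans ?_
        exact mul_le_mul_of_nonneg_right (le_max_left _ _) hεm.le
      calc _ ≤ C₀ * C₁ * ε ^ m + max C₂ 0 * ε ^ m := key.trans (add_le_add b1 b2)
        _ = (C₀ * C₁ + max C₂ 0) * ε ^ m := (add_mul _ _ _).symm
  · intro Φ hΦ
    refine ⟨?_, ?_, commutator_moderate T T₀ Φ hΦ.moderate⟩
    · -- tendsto_zero
      intro B' hB' B hB δ hδ
      have h₁ := T_small T B' (fun ε u => jEmb (Φ ε u)) (hΦ.tendsto_zero B' hB') B hB (δ/2)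
        (half_pos hδ)
      have h₂ := hΦ.tendsto_zero (T '' B') (hB'.image T) B hB (δ/2) (half_pos hδ)
      filter_upwards [h₁, h₂] with ε hε₁ hε₂ u hu g hg
      have e1 : jEmb ((T₀.comp (Φ ε) - (Φ ε).comp T) u) g
          = T (jEmb (Φ ε u)) g - jEmb (Φ ε (T u)) g := by
        have : (T₀.comp (Φ ε) - (Φ ε).comp T) u = T₀ (Φ ε u) - Φ ε (T u) := by
          simp [ContinuousLinearMap.sub_apply, ContinuousLinearMap.comp_apply]
        rw [this, jEmb_sub, hcomm (Φ ε u)]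
      rw [e1]
      calc ‖T (jEmb (Φ ε u)) g - jEmb (Φ ε (T u)) g‖
          ≤ ‖T (jEmb (Φ ε u)) g‖ + ‖jEmb (Φ ε (T u)) g‖ := norm_sub_le _ _
        _ < δ/2 + δ/2 :=
            add_lt_add (hε₁ u hu g hg) (hε₂ (T u) (Set.mem_image_of_mem T hu) g hg)
        _ = δ := add_halves δ
    · -- negligible_on_Sch
      intro m B hB k l
      obtain ⟨s, C₀, hC₀, hT₀⟩ := T0_bound T₀ k l
      obtain ⟨C₁, hC₁, h₁⟩ := sup_negligible s B m (fun ε f => Φ ε (jEmb f))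
        (fun k' l' => hΦ.negligible_on_Sch m B hB k' l')
      obtain ⟨C₂, h₂⟩ := hΦ.negligible_on_Sch m (T₀ '' B) (hB.image T₀) k l
      refine ⟨C₀ * C₁ + max C₂ 0, ?_⟩
      filter_upwards [h₁, h₂, zeroFilter_Ioc] with ε hε₁ hε₂ hε1 f hf
      have hεm : 0 < ε ^ m := pow_pos hε1.1 m
      have e1 : (T₀.comp (Φ ε) - (Φ ε).comp T) (jEmb f)
          = T₀ (Φ ε (jEmb f)) - Φ ε (jEmb (T₀ f)) := by
        have hc : T (jEmb f) = jEmb (T₀ f) := (hcomm f).symm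
        rw [ContinuousLinearMap.sub_apply, ContinuousLinearMap.comp_apply,
          ContinuousLinearMap.comp_apply, hc]
      rw [e1]
      have key : SchwartzMap.seminorm ℂ k l (T₀ (Φ ε (jEmb f)) - Φ ε (jEmb (T₀ f)))
          ≤ SchwartzMap.seminorm ℂ k l (T₀ (Φ ε (jEmb f)))
            + SchwartzMap.seminorm ℂ k l (Φ ε (jEmb (T₀ f))) := map_sub_le_add _ _ _
      have b1 : SchwartzMap.seminorm ℂ k l (T₀ (Φ ε (jEmb f))) ≤ C₀ * C₁ * ε ^ m := by
        refine (hT₀ _).trans ?_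
        rw [mul_assoc]
        exact mul_le_mul_of_nonneg_left (hε₁ f hf) hC₀
      have b2 : SchwartzMap.seminorm ℂ k l (Φ ε (jEmb (T₀ f))) ≤ max C₂ 0 * ε ^ m := by
        refine (hε₂ (T₀ f) (Set.mem_image_of_mem T₀ hf)).trans ?_
        exact mul_le_mul_of_nonneg_right (le_max_left _ _) hεm.le
      calc _ ≤ C₀ * C₁ * ε ^ m + max C₂ 0 * ε ^ m := key.trans (add_le_add b1 b2)
        _ = (C₀ * C₁ + max C₂ 0) * ε ^ m := (add_mul _ _ _).symm


end
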